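/- For a TRS R with AC symbols and its extended system R^e, strict coherence holds: ∼AC · →R^e,AC ⊆ →R^e,AC · ∼AC. -/

import Mathlib

/-- First-order terms over a signature `F` with natural-number variables. -/
inductive Tm (F : Type) : Type
  | var : Nat → Tm F
  | fn  : F → List (Tm F) → Tm F

namespace Tm

variable {F : Type}

mutual
def subst (σ : Nat → Tm F) : Tm F → Tm F
  | .var n => σ n
  | .fn f ts => .fn f (substList σ ts)
def substList (σ : Nat → Tm F) : List (Tm F) → List (Tm F)
  | [] => []
  | t :: ts => subst σ t :: substList σ ts
end

mutual
def varsList : Tm F → List Nat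
  | .var n => [n]
  | .fn _ ts => varsListL ts
def varsListL : List (Tm F) → List Nat
  | [] => []
  | t :: ts => varsList t ++ varsListL ts
end

/-- The set of variables of a term. -/
def vars (t : Tm F) : Set Nat := {n | n ∈ varsList t}

/-- A term is linear if no variable occurs more than once. -/
def Linear (t : Tm F) : Prop := (varsList t).Nodup

/-- The subterm at a given position (if the position exists). -/
def subtermAt : Tm F → List Nat → Option (Tm F)
  | t, [] => some t
  | .var _, _ :: _ => none
  | .fn _ ts, i :: p =>
    match ts[i]? with
    | some u => subtermAt u p
    | none => none
  termination_by t p => p.length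

/-- Replacement of the subterm at a given position. -/
def replaceAt : Tm F → List Nat → Tm F → Option (Tm F)
  | _, [], s => some s
  | .var _, _ :: _, _ => none
  | .fn f ts, i :: p, s =>
    match ts[i]? with
    | some u => (replaceAt u p s).map fun u' => .fn f (ts.set i u')
    | none => none
  termination_by t p _ => p.length

end Tm

open Tm

/-- A term rewrite system (or equational system): a set of pairs of terms. -/
abbrev TRS (F : Type) := Set (Tm F × Tm F)

/-- Well-formedness of the rules: left-hand sides are not variables and
variables of right-hand sides occur on the left. -/
def IsTRS {F : Type} (R : TRS F) : Prop :=
  ∀ p ∈ R, (∀ n, p.1 ≠ .var n) ∧ vars p.2 ⊆ vars p.1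

def LeftLinear {F : Type} (R : TRS F) : Prop := ∀ p ∈ R, Linear p.1

/-- One-step rewrite relation of a set of rules (closed under contexts and
substitutions). -/
def Rew {F : Type} (R : TRS F) (s t : Tm F) : Prop :=
  ∃ p l r σ, (l, r) ∈ R ∧ subtermAt s p = some (subst σ l) ∧
    replaceAt s p (subst σ r) = some t

/-- Normal forms. -/
def NF {A : Type} (r : A → A → Prop) (a : A) : Prop := ∀ b, ¬ r a b

/-- The equational theory `∼B` generated by an ES `B`. -/
def simE {F : Type} (B : TRS F) : Tm F → Tm F → Prop :=
  Relation.EqvGen (Rew B)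

/-- Rewriting modulo: `∼B · →R · ∼B`. -/
def RewMod {F : Type} (R B : TRS F) (s t : Tm F) : Prop :=
  ∃ s' t', simE B s s' ∧ Rew R s' t' ∧ simE B t' t

def Terminating {F : Type} (R : TRS F) : Prop :=
  WellFounded (fun a b => Rew R b a)

def TerminatingMod {F : Type} (R B : TRS F) : Prop :=
  WellFounded (fun a b => RewMod R B b a)

/-- Conversion modulo `B`: arbitrary sequences of `→R`, `←R` and `∼B` steps. -/
def ConvMod {F : Type} (R B : TRS F) : Tm F → Tm F → Prop :=
  Relation.ReflTransGen (fun a b => Rew R a b ∨ Rew R b a ∨ simE B a b)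

/-- Joinability modulo `B` using the plain rewrite relation:
`→R* · ∼B · ←R*`. -/
def JoinMod {F : Type} (R B : TRS F) (s t : Tm F) : Prop :=
  ∃ u v, Relation.ReflTransGen (Rew R) s u ∧ simE B u v ∧
    Relation.ReflTransGen (Rew R) t v

def ChurchRosserMod {F : Type} (R B : TRS F) : Prop :=
  ∀ s t, ConvMod R B s t → JoinMod R B s t

def Joinable {F : Type} (R : TRS F) (s t : Tm F) : Prop :=
  ∃ v, Relation.ReflTransGen (Rew R) s v ∧ Relation.ReflTransGen (Rew R) t v

def Confluent {F : Type} (R : TRS F) : Prop :=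
  ∀ s t u, Relation.ReflTransGen (Rew R) s t → Relation.ReflTransGen (Rew R) s u →
    Joinable R t u

/-- Renaming a term by a bijection on variables. -/
def rename {F : Type} (ρ : Nat ≃ Nat) (t : Tm F) : Tm F :=
  subst (fun n => .var (ρ n)) t

def VariantTm {F : Type} (s t : Tm F) : Prop := ∃ ρ : Nat ≃ Nat, rename ρ s = t

def VariantRule {F : Type} (p q : Tm F × Tm F) : Prop :=
  ∃ ρ : Nat ≃ Nat, rename ρ p.1 = q.1 ∧ rename ρ p.2 = q.2

def Unifies {F : Type} (σ : Nat → Tm F) (s t : Tm F) : Prop := subst σ s = subst σ t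

/-- Most general unifier. -/
def IsMGU {F : Type} (σ : Nat → Tm F) (s t : Tm F) : Prop :=
  Unifies σ s t ∧ ∀ τ, Unifies τ s t → ∃ δ, ∀ n, τ n = subst δ (σ n)

/-- `CriticalPeak R₁ R₂ t p s u` : `t ←R₁[p] s →R₂[ε] u` is a critical peak
obtained from an overlap of variable-disjoint variants of rules of `R₁`
(inner rule) and `R₂` (root rule). -/
def CriticalPeak {F : Type} (R₁ R₂ : TRS F) (t : Tm F) (p : List Nat) (s u : Tm F) :
    Prop :=
  ∃ l₁ r₁ l₂ r₂ σ,
    (∃ q ∈ R₁, VariantRule q (l₁, r₁)) ∧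
    (∃ q ∈ R₂, VariantRule q (l₂, r₂)) ∧
    (vars l₁ ∪ vars r₁) ∩ (vars l₂ ∪ vars r₂) = ∅ ∧
    (∃ f ts, subtermAt l₂ p = some (.fn f ts) ∧ IsMGU σ l₁ (.fn f ts)) ∧
    (p = [] → ¬ VariantRule (l₁, r₁) (l₂, r₂)) ∧
    s = subst σ l₂ ∧
    replaceAt s p (subst σ r₁) = some t ∧
    u = subst σ r₂

/-- The set of critical pairs between `R₁` and `R₂`. -/
def CP {F : Type} (R₁ R₂ : TRS F) : Set (Tm F × Tm F) :=
  {tu | ∃ p s, CriticalPeak R₁ R₂ tu.1 p s tu.2}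

/-- A critical peak `t ←[p] s →[ε] u` is prime (w.r.t. `R`) if all proper
subterms of `s|p` are in normal form w.r.t. `→R`. -/
def PrimeAt {F : Type} (R : TRS F) (s : Tm F) (p : List Nat) : Prop :=
  ∀ q v, q ≠ [] → subtermAt s (p ++ q) = some v → NF (Rew R) v

/-- Prime critical pairs of a TRS. -/
def PCP {F : Type} (R : TRS F) : Set (Tm F × Tm F) :=
  {tu | ∃ p s, CriticalPeak R R tu.1 p s tu.2 ∧ PrimeAt R s p}

/-- `E ∪ E⁻¹`. -/
def sympm {F : Type} (E : TRS F) : TRS F :=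
  E ∪ {q | ∃ p ∈ E, q = (p.2, p.1)}

/-- Prime critical pairs between `R` and `B^±` (in both directions), where
primality is always checked with respect to `→R`. -/
def PCPpm {F : Type} (R B : TRS F) : Set (Tm F × Tm F) :=
  {tu | ∃ p s, (CriticalPeak R (sympm B) tu.1 p s tu.2 ∨
                CriticalPeak (sympm B) R tu.1 p s tu.2) ∧ PrimeAt R s p}

/-- The associativity and commutativity axioms for the symbols in `Ac`,
oriented left-to-right. -/
def ACax {F : Type} (Ac : Set F) : TRS F :=
  {q | ∃ f ∈ Ac,
    q = (Tm.fn f [Tm.fn f [Tm.var 0, Tm.var 1], Tm.var 2],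
         Tm.fn f [Tm.var 0, Tm.fn f [Tm.var 1, Tm.var 2]]) ∨
    q = (Tm.fn f [Tm.var 0, Tm.var 1], Tm.fn f [Tm.var 1, Tm.var 0])}

/-- AC equivalence of terms. -/
def simAC {F : Type} (Ac : Set F) : Tm F → Tm F → Prop := simE (ACax Ac)

/-- Peterson–Stickel rewriting: rewriting with AC matching at the redex. -/
def RewPS {F : Type} (Ac : Set F) (R : TRS F) (s t : Tm F) : Prop :=
  ∃ p l r σ w, (l, r) ∈ R ∧ subtermAt s p = some w ∧ simAC Ac w (subst σ l) ∧
    replaceAt s p (subst σ r) = some t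

/-- The extended system `R^e`: `R` together with all extensions
`f(f(u,v),x) → f(r,x)` of rules `f(u,v) → r` with `f` an AC symbol
and `x` a fresh variable. -/
def ACExt {F : Type} (Ac : Set F) (R : TRS F) : TRS F :=
  R ∪ {q | ∃ f ∈ Ac, ∃ u v r x, (Tm.fn f [u, v], r) ∈ R ∧
        x ∉ vars (Tm.fn f [u, v]) ∧ x ∉ vars r ∧
        q = (Tm.fn f [Tm.fn f [u, v], Tm.var x], Tm.fn f [r, Tm.var x])}


section Aux
variable {F : Type}

lemma subtermAt_nil (t : Tm F) : subtermAt t [] = some t := by rw [subtermAt]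

lemma replaceAt_nil (t s : Tm F) : replaceAt t [] s = some s := by rw [replaceAt]

lemma subtermAt_fn (f : F) (ts : List (Tm F)) (i : Nat) (p : List Nat) :
    subtermAt (Tm.fn f ts) (i :: p) =
      match ts[i]? with
      | some u => subtermAt u p
      | none => none := by
  rw [subtermAt]

lemma replaceAt_fn (f : F) (ts : List (Tm F)) (i : Nat) (p : List Nat) (s : Tm F) :
    replaceAt (Tm.fn f ts) (i :: p) s =
      match ts[i]? with
      | some u => (replaceAt u p s).map fun u' => Tm.fn f (ts.set i u')
      | none => none := by
  rw [replaceAt]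

lemma subtermAt_fn_none {f : F} {ts : List (Tm F)} {i : Nat} (h : ts[i]? = none)
    (p : List Nat) : subtermAt (Tm.fn f ts) (i :: p) = none := by
  rw [subtermAt_fn, h]

lemma replaceAt_fn_none {f : F} {ts : List (Tm F)} {i : Nat} (h : ts[i]? = none)
    (p : List Nat) (s : Tm F) : replaceAt (Tm.fn f ts) (i :: p) s = none := by
  rw [replaceAt_fn, h]

lemma subtermAt_fn_some {f : F} {ts : List (Tm F)} {i : Nat} {u : Tm F} (h : ts[i]? = some u)
    (p : List Nat) : subtermAt (Tm.fn f ts) (i :: p) = subtermAt u p := by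
  rw [subtermAt_fn, h]

lemma replaceAt_fn_some {f : F} {ts : List (Tm F)} {i : Nat} {u : Tm F} (h : ts[i]? = some u)
    (p : List Nat) (s : Tm F) :
    replaceAt (Tm.fn f ts) (i :: p) s =
      (replaceAt u p s).map fun u' => Tm.fn f (ts.set i u') := by
  rw [replaceAt_fn, h]


lemma List.set_self' {α : Type _} {l : List α} {i : Nat} {a : α} (h : l[i]? = some a) :
    l.set i a = l := by
  apply List.ext_getElem?
  intro j
  by_cases hj : i = j
  · subst hj; rw [List.getElem?_set_self (List.getElem?_eq_some_iff.mp h).1, h]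
  · rw [List.getElem?_set_ne hj]

lemma subtermAt_of_replaceAt : ∀ {p : List Nat} {s t v : Tm F},
    replaceAt s p v = some t → subtermAt t p = some v := by
  intro p
  induction p with
  | nil => intro s t v h; rw [replaceAt_nil] at h; cases h; exact subtermAt_nil _
  | cons i p ih =>
    intro s t v h
    cases s with
    | var n => rw [replaceAt] at h; cases h
    | fn f ts =>
      cases hi : ts[i]? with
      | none => rw [replaceAt_fn_none hi] at h; cases h
      | some u =>
        rw [replaceAt_fn_some hi] at h
        cases hu : replaceAt u p v with
        | none => rw [hu] at h; cases h
        | some u' =>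
          rw [hu, Option.map_some] at h
          cases h
          rw [subtermAt_fn_some (List.getElem?_set_self (List.getElem?_eq_some_iff.mp hi).1)]
          exact ih hu

lemma replaceAt_self : ∀ {p : List Nat} {s u : Tm F},
    subtermAt s p = some u → replaceAt s p u = some s := by
  intro p
  induction p with
  | nil => intro s u h; rw [subtermAt_nil] at h; cases h; exact replaceAt_nil ..
  | cons i p ih =>
    intro s u h
    cases s with
    | var n => rw [subtermAt] at h; cases h
    | fn f ts =>
      cases hi : ts[i]? with
      | none => rw [subtermAt_fn_none hi] at h; cases h
      | some w =>
        rw [subtermAt_fn_some hi] at h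
        rw [replaceAt_fn_some hi, ih h, Option.map_some, List.set_self' hi]

lemma replaceAt_replaceAt : ∀ {p : List Nat} {s t u v : Tm F},
    replaceAt s p u = some t → replaceAt t p v = replaceAt s p v := by
  intro p
  induction p with
  | nil => intro s t u v h; rw [replaceAt_nil, replaceAt_nil]
  | cons i p ih =>
    intro s t u v h
    cases s with
    | var n => rw [replaceAt] at h; cases h
    | fn f ts =>
      cases hi : ts[i]? with
      | none => rw [replaceAt_fn_none hi] at h; cases h
      | some w =>
        rw [replaceAt_fn_some hi] at h
        cases hw : replaceAt w p u with
        | none => rw [hw] at h; cases h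
        | some w' =>
          rw [hw, Option.map_some] at h; cases h
          rw [replaceAt_fn_some (List.getElem?_set_self (List.getElem?_eq_some_iff.mp hi).1),
            replaceAt_fn_some hi, ih hw]
          simp only [List.set_set]

lemma replaceAt_isSome : ∀ {p : List Nat} {s u : Tm F} (v : Tm F),
    subtermAt s p = some u → ∃ t, replaceAt s p v = some t := by
  intro p
  induction p with
  | nil => intro s u v _; exact ⟨v, replaceAt_nil ..⟩
  | cons i p ih =>
    intro s u v h
    cases s with
    | var n => rw [subtermAt] at h; cases h
    | fn f ts =>
      cases hi : ts[i]? with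
      | none => rw [subtermAt_fn_none hi] at h; cases h
      | some w =>
        rw [subtermAt_fn_some hi] at h
        obtain ⟨t, ht⟩ := ih v h
        exact ⟨_, by rw [replaceAt_fn_some hi, ht, Option.map_some]⟩


lemma substList_length (σ : Nat → Tm F) : ∀ (ts : List (Tm F)),
    (substList σ ts).length = ts.length
  | [] => by rw [substList]
  | t :: ts => by rw [substList, List.length_cons, List.length_cons, substList_length σ ts]

mutual
theorem subst_congr (σ τ : Nat → Tm F) : ∀ (t : Tm F),
    (∀ n ∈ varsList t, σ n = τ n) → subst σ t = subst τ t
  | .var n, h => by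
    rw [subst, subst]; exact h n (by rw [varsList]; exact List.mem_singleton_self _)
  | .fn f ts, h => by
    rw [subst, subst, substList_congr σ τ ts (fun n hn => h n (by rwa [varsList]))]
theorem substList_congr (σ τ : Nat → Tm F) : ∀ (ts : List (Tm F)),
    (∀ n ∈ varsListL ts, σ n = τ n) → substList σ ts = substList τ ts
  | [], _ => rfl
  | t :: ts, h => by
    rw [substList, substList,
      subst_congr σ τ t (fun n hn => h n (by rw [varsListL]; exact List.mem_append_left _ hn)),
      substList_congr σ τ ts (fun n hn => h n (by rw [varsListL]; exact List.mem_append_right _ hn))]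
end

lemma mem_ACax {Ac : Set F} {l r : Tm F} (h : (l, r) ∈ ACax Ac) :
    ∃ f ∈ Ac,
      (l = Tm.fn f [Tm.fn f [Tm.var 0, Tm.var 1], Tm.var 2] ∧
       r = Tm.fn f [Tm.var 0, Tm.fn f [Tm.var 1, Tm.var 2]]) ∨
      (l = Tm.fn f [Tm.var 0, Tm.var 1] ∧ r = Tm.fn f [Tm.var 1, Tm.var 0]) := by
  obtain ⟨f, hf, h | h⟩ := h
  · exact ⟨f, hf, Or.inl ⟨congrArg Prod.fst h, congrArg Prod.snd h⟩⟩
  · exact ⟨f, hf, Or.inr ⟨congrArg Prod.fst h, congrArg Prod.snd h⟩⟩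

lemma rew_shape {Ac : Set F} {u v : Tm F} (h : Rew (ACax Ac) u v) :
    ∃ g us vs, u = .fn g us ∧ v = .fn g vs ∧ us.length = vs.length := by
  obtain ⟨p, l, r, σ, hmem, h1, h2⟩ := h
  cases p with
  | nil =>
    rw [subtermAt_nil, Option.some_inj] at h1
    rw [replaceAt_nil, Option.some_inj] at h2
    obtain ⟨f, _, ⟨hl, hr⟩ | ⟨hl, hr⟩⟩ := mem_ACax hmem <;>
      subst hl hr h1 h2 <;>
      exact ⟨f, _, _, by rw [subst], by rw [subst],
        by simp [substList_length]⟩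
  | cons i p =>
    cases u with
    | var n => rw [subtermAt] at h1; cases h1
    | fn f ts =>
      cases hi : ts[i]? with
      | none => rw [replaceAt_fn_none hi] at h2; cases h2
      | some w =>
        rw [replaceAt_fn_some hi] at h2
        cases hw : replaceAt w p (subst σ r) with
        | none => rw [hw] at h2; cases h2
        | some w' =>
          rw [hw, Option.map_some, Option.some_inj] at h2
          exact ⟨f, ts, ts.set i w', rfl, h2.symm, (List.length_set ..).symm⟩

lemma simAC_shape {Ac : Set F} {u v : Tm F} (h : simAC Ac u v) :
    u = v ∨ ∃ g us vs, u = .fn g us ∧ v = .fn g vs ∧ us.length = vs.length := by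
  induction h with
  | rel x y hxy => exact Or.inr (rew_shape hxy)
  | refl x => exact Or.inl rfl
  | symm x y _ ih =>
    rcases ih with h | ⟨g, us, vs, h1, h2, h3⟩
    · exact Or.inl h.symm
    · exact Or.inr ⟨g, vs, us, h2, h1, h3.symm⟩
  | trans x y z _ _ ih1 ih2 =>
    rcases ih1 with h | ⟨g, us, vs, h1, h2, h3⟩
    · rwa [h]
    · rcases ih2 with h' | ⟨g', us', vs', h1', h2', h3'⟩
      · exact Or.inr ⟨g, us, vs, h1, h' ▸ h2, h3⟩
      · rw [h2] at h1'
        cases h1'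
        exact Or.inr ⟨g, us, vs', h1, h2', h3.trans h3'⟩

lemma simAC_fn2 {Ac : Set F} {w : Tm F} {f : F} {A B : Tm F}
    (h : simAC Ac w (.fn f [A, B])) : ∃ X Y, w = .fn f [X, Y] := by
  rcases simAC_shape h with h | ⟨g, us, vs, h1, h2, h3⟩
  · exact ⟨A, B, h⟩
  · cases h2
    obtain ⟨X, Y, rfl⟩ := List.length_eq_two.mp h3
    exact ⟨X, Y, h1⟩

lemma rew_congr {E : TRS F} {A A' : Tm F} {f : F} {ts : List (Tm F)} {j : Nat}
    (hj : ts[j]? = some A) (h : Rew E A A') :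
    Rew E (.fn f ts) (.fn f (ts.set j A')) := by
  obtain ⟨p, l, r, σ, hm, h1, h2⟩ := h
  exact ⟨j :: p, l, r, σ, hm, by rw [subtermAt_fn_some hj]; exact h1,
    by rw [replaceAt_fn_some hj, h2, Option.map_some]⟩

lemma simAC_refl {Ac : Set F} (a : Tm F) : simAC Ac a a := Relation.EqvGen.refl a

lemma simAC_symm {Ac : Set F} {a b : Tm F} (h : simAC Ac a b) : simAC Ac b a :=
  Relation.EqvGen.symm _ _ h

lemma simAC_trans {Ac : Set F} {a b c : Tm F} (h : simAC Ac a b) (h' : simAC Ac b c) :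
    simAC Ac a c := Relation.EqvGen.trans _ _ _ h h'

lemma simAC_of_rew {Ac : Set F} {a b : Tm F} (h : Rew (ACax Ac) a b) : simAC Ac a b :=
  Relation.EqvGen.rel _ _ h

lemma simAC_congr {Ac : Set F} {A A' : Tm F} (h : simAC Ac A A') :
    ∀ (f : F) (ts : List (Tm F)) (j : Nat), ts[j]? = some A →
      simAC Ac (.fn f ts) (.fn f (ts.set j A')) := by
  induction h with
  | rel x y hxy => exact fun f ts j hj => simAC_of_rew (rew_congr hj hxy)
  | refl x => intro f ts j hj; rw [List.set_self' hj]; exact simAC_refl _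
  | symm x y _ ih =>
    intro f ts j hj
    have hlt : j < ts.length := (List.getElem?_eq_some_iff.mp hj).1
    have h2 := ih f (ts.set j x) j (List.getElem?_set_self hlt)
    rw [List.set_set, List.set_self' hj] at h2
    exact simAC_symm h2
  | trans x y z _ _ ih1 ih2 =>
    intro f ts j hj
    have hlt : j < ts.length := (List.getElem?_eq_some_iff.mp hj).1
    have h2 := ih2 f (ts.set j y) j (List.getElem?_set_self hlt)
    rw [List.set_set] at h2
    exact simAC_trans (ih1 f ts j hj) h2

lemma simAC_congr2l {Ac : Set F} {A A' : Tm F} (h : simAC Ac A A') (f : F) (B : Tm F) :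
    simAC Ac (.fn f [A, B]) (.fn f [A', B]) :=
  simAC_congr h f [A, B] 0 rfl

lemma simAC_congr2r {Ac : Set F} {B B' : Tm F} (h : simAC Ac B B') (f : F) (A : Tm F) :
    simAC Ac (.fn f [A, B]) (.fn f [A, B']) :=
  simAC_congr h f [A, B] 1 rfl

/-- A single AC step (in either direction) with explicit position data. -/
def ACstep1 (Ac : Set F) (b a : Tm F) : Prop :=
  ∃ q lhs rhs σ, ((lhs, rhs) ∈ ACax Ac ∨ (rhs, lhs) ∈ ACax Ac) ∧
    subtermAt b q = some (subst σ lhs) ∧ replaceAt b q (subst σ rhs) = some a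

lemma ACstep1_symm {Ac : Set F} {b a : Tm F} (h : ACstep1 Ac b a) : ACstep1 Ac a b := by
  obtain ⟨q, lhs, rhs, σ, hmem, h1, h2⟩ := h
  exact ⟨q, rhs, lhs, σ, hmem.symm, subtermAt_of_replaceAt h2,
    by rw [replaceAt_replaceAt h2]; exact replaceAt_self h1⟩

lemma ACstep1_of_rew {Ac : Set F} {b a : Tm F} (h : Rew (ACax Ac) b a) : ACstep1 Ac b a := by
  obtain ⟨q, lhs, rhs, σ, hmem, h1, h2⟩ := h
  exact ⟨q, lhs, rhs, σ, Or.inl hmem, h1, h2⟩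

lemma simAC_of_ACstep1 {Ac : Set F} {b a : Tm F} (h : ACstep1 Ac b a) : simAC Ac b a := by
  obtain ⟨q, lhs, rhs, σ, hmem | hmem, h1, h2⟩ := h
  · exact simAC_of_rew ⟨q, lhs, rhs, σ, hmem, h1, h2⟩
  · refine simAC_symm (simAC_of_rew ⟨q, rhs, lhs, σ, hmem, subtermAt_of_replaceAt h2, ?_⟩)
    rw [replaceAt_replaceAt h2]; exact replaceAt_self h1

lemma le_foldr_max {n : Nat} : ∀ {L : List Nat}, n ∈ L → n ≤ L.foldr max 0
  | a :: L, h => by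
    rcases List.mem_cons.mp h with rfl | h
    · exact le_max_left _ _
    · exact le_trans (le_foldr_max h) (le_max_right _ _)

lemma exists_fresh (L : List Nat) : ∃ x, x ∉ L :=
  ⟨L.foldr max 0 + 1, fun h => absurd (le_foldr_max h) (by omega)⟩

lemma ACExt_lhs_ne_var {Ac : Set F} {R : TRS F} (hTRS : IsTRS R) {l r : Tm F}
    (h : (l, r) ∈ ACExt Ac R) : ∀ n, l ≠ .var n := by
  rcases h with h | ⟨f, _, u, v, r', x, _, _, _, hq⟩
  · exact (hTRS _ h).1
  · simp only [Prod.mk.injEq] at hq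
    obtain ⟨h1, h2⟩ := hq
    subst h1
    intro n hn
    cases hn


lemma subst_var (σ : Nat → Tm F) (n : Nat) : subst σ (.var n) = σ n := by rw [subst]

lemma subst_fn2 (σ : Nat → Tm F) (f : F) (a b : Tm F) :
    subst σ (.fn f [a, b]) = .fn f [subst σ a, subst σ b] := by
  rw [subst, substList, substList, substList]

lemma varsList_fn2 (f : F) (u v : Tm F) :
    varsList (Tm.fn f [u, v]) = varsList u ++ (varsList v ++ []) := by
  rw [varsList, varsListL, varsListL, varsListL]

lemma mem_vars_iff {t : Tm F} {n : Nat} : n ∈ vars t ↔ n ∈ varsList t := Iff.rfl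

lemma assoc_step {Ac : Set F} {f : F} (hf : f ∈ Ac) (X Y Z : Tm F) :
    Rew (ACax Ac) (.fn f [.fn f [X, Y], Z]) (.fn f [X, .fn f [Y, Z]]) := by
  refine ⟨[], _, _, fun n => if n = 0 then X else if n = 1 then Y else Z,
    ⟨f, hf, Or.inl rfl⟩, ?_, ?_⟩
  · rw [subtermAt_nil]; simp [subst_fn2, subst_var]
  · rw [replaceAt_nil]; simp [subst_fn2, subst_var]

lemma comm_step {Ac : Set F} {f : F} (hf : f ∈ Ac) (X Y : Tm F) :
    Rew (ACax Ac) (.fn f [X, Y]) (.fn f [Y, X]) := by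
  refine ⟨[], _, _, fun n => if n = 0 then X else Y,
    ⟨f, hf, Or.inr rfl⟩, ?_, ?_⟩
  · rw [subtermAt_nil]; simp [subst_fn2, subst_var]
  · rw [replaceAt_nil]; simp [subst_fn2, subst_var]

lemma ext_absorb {Ac : Set F} {R : TRS F} {f : F} (hf : f ∈ Ac)
    {l r : Tm F} (hlr : (l, r) ∈ ACExt Ac R) {u v : Tm F} (hl : l = .fn f [u, v])
    (σ : Nat → Tm F) (Z : Tm F) :
    ∃ l' r' σ', (l', r') ∈ ACExt Ac R ∧
      simAC Ac (.fn f [subst σ l, Z]) (subst σ' l') ∧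
      simAC Ac (subst σ' r') (.fn f [subst σ r, Z]) := by
  subst hl
  rcases hlr with hR | ⟨f₀, hf₀, u₀, v₀, r₀, x, hR, hx1, hx2, hq⟩
  · -- ordinary rule: use its extension with a fresh variable
    obtain ⟨x, hx⟩ := exists_fresh (varsList (Tm.fn f [u, v]) ++ varsList r)
    have hx1 : x ∉ varsList (Tm.fn f [u, v]) := fun h => hx (List.mem_append_left _ h)
    have hx2 : x ∉ varsList r := fun h => hx (List.mem_append_right _ h)
    refine ⟨.fn f [.fn f [u, v], .var x], .fn f [r, .var x],
      fun n => if n = x then Z else σ n, Or.inr ⟨f, hf, u, v, r, x, hR, hx1, hx2, rfl⟩, ?_, ?_⟩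
    · have e : subst (fun n => if n = x then Z else σ n) (Tm.fn f [Tm.fn f [u, v], Tm.var x]) =
          .fn f [subst σ (.fn f [u, v]), Z] := by
        rw [subst_fn2, subst_var, if_pos rfl]
        congr 2
        exact subst_congr _ _ _ fun n hn => if_neg (fun he : n = x => hx1 (he ▸ hn))
      rw [e]; exact simAC_refl _
    · have e : subst (fun n => if n = x then Z else σ n) (Tm.fn f [r, Tm.var x]) =
          .fn f [subst σ r, Z] := by
        rw [subst_fn2, subst_var, if_pos rfl]
        congr 2
        exact subst_congr _ _ _ fun n hn => if_neg (fun he : n = x => hx2 (he ▸ hn))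
      rw [e]; exact simAC_refl _
  · -- the rule is itself an extension
    simp only [Prod.mk.injEq] at hq
    obtain ⟨hq1, hq2⟩ := hq
    cases hq1
    subst hq2
    have hx1' : x ∉ varsList (Tm.fn f [u₀, v₀]) := hx1
    have hx2' : x ∉ varsList r₀ := hx2
    refine ⟨_, _, fun n => if n = x then .fn f [σ x, Z] else σ n,
      Or.inr ⟨f, hf, u₀, v₀, r₀, x, hR, hx1, hx2, rfl⟩, ?_, ?_⟩
    · have e : subst (fun n => if n = x then .fn f [σ x, Z] else σ n)
          (Tm.fn f [Tm.fn f [u₀, v₀], Tm.var x]) =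
          .fn f [subst σ (.fn f [u₀, v₀]), .fn f [σ x, Z]] := by
        rw [subst_fn2, subst_var, if_pos rfl]
        congr 2
        exact subst_congr _ _ _ fun n hn => if_neg (fun he : n = x => hx1' (he ▸ hn))
      rw [e, subst_fn2, subst_var]
      exact simAC_of_rew (assoc_step hf _ _ _)
    · have e : subst (fun n => if n = x then .fn f [σ x, Z] else σ n)
          (Tm.fn f [r₀, Tm.var x]) = .fn f [subst σ r₀, .fn f [σ x, Z]] := by
        rw [subst_fn2, subst_var, if_pos rfl]
        congr 2
        exact subst_congr _ _ _ fun n hn => if_neg (fun he : n = x => hx2' (he ▸ hn))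
      rw [e, subst_fn2, subst_var]
      exact simAC_symm (simAC_of_rew (assoc_step hf _ _ _))


lemma subtermAt_fn2_0 (f : F) (A B : Tm F) (p : List Nat) :
    subtermAt (Tm.fn f [A, B]) (0 :: p) = subtermAt A p :=
  subtermAt_fn_some rfl p

lemma subtermAt_fn2_1 (f : F) (A B : Tm F) (p : List Nat) :
    subtermAt (Tm.fn f [A, B]) (1 :: p) = subtermAt B p :=
  subtermAt_fn_some rfl p

lemma subtermAt_fn2_ge (f : F) (A B : Tm F) (i : Nat) (p : List Nat) :
    subtermAt (Tm.fn f [A, B]) ((i + 2) :: p) = none :=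
  subtermAt_fn_none (List.getElem?_eq_none (by simp)) p

lemma replaceAt_fn2_0 (f : F) (A B : Tm F) (p : List Nat) (s : Tm F) :
    replaceAt (Tm.fn f [A, B]) (0 :: p) s =
      (replaceAt A p s).map fun A' => Tm.fn f [A', B] :=
  replaceAt_fn_some rfl p s

lemma replaceAt_fn2_1 (f : F) (A B : Tm F) (p : List Nat) (s : Tm F) :
    replaceAt (Tm.fn f [A, B]) (1 :: p) s =
      (replaceAt B p s).map fun B' => Tm.fn f [A, B'] :=
  replaceAt_fn_some rfl p s

lemma rewPS_congr {Ac : Set F} {E : TRS F} {A A' : Tm F} {f : F} {ts : List (Tm F)} {j : Nat}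
    (hj : ts[j]? = some A) (h : RewPS Ac E A A') :
    RewPS Ac E (.fn f ts) (.fn f (ts.set j A')) := by
  obtain ⟨p, l, r, σ, w, hm, h1, hs, h2⟩ := h
  exact ⟨j :: p, l, r, σ, w, hm, by rw [subtermAt_fn_some hj]; exact h1, hs,
    by rw [replaceAt_fn_some hj, h2, Option.map_some]⟩

/-- Decompose the left-hand side of a rule of `R^e` whose instance is
AC-equivalent to an `f`-headed binary term. -/
lemma rule_lhs_fn2 {Ac : Set F} {R : TRS F} (hTRS : IsTRS R) {l r : Tm F}
    (hmem : (l, r) ∈ ACExt Ac R) {σ : Nat → Tm F} {f : F} {X Y : Tm F}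
    (h : simAC Ac (Tm.fn f [X, Y]) (subst σ l)) : ∃ u v, l = .fn f [u, v] := by
  obtain ⟨A, B, hAB⟩ := simAC_fn2 (simAC_symm h)
  cases l with
  | var n => exact absurd rfl (ACExt_lhs_ne_var hTRS hmem n)
  | fn g us =>
    rw [subst] at hAB
    injection hAB with hg hus
    subst hg
    have hlen : us.length = 2 := by
      have := congrArg List.length hus
      rwa [substList_length] at this
    obtain ⟨u, v, rfl⟩ := List.length_eq_two.mp hlen
    exact ⟨u, v, rfl⟩

section LCRoot

variable {Ac : Set F} {R : TRS F}

/-- The easy case: the `R^e`-redex is at the root. -/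
lemma LC_root_redex (hab : simAC Ac a b) {c : Tm F}
    (h : ∃ l r σ w, (l, r) ∈ ACExt Ac R ∧ subtermAt b [] = some w ∧
      simAC Ac w (subst σ l) ∧ replaceAt b [] (subst σ r) = some c) :
      ∃ d, RewPS Ac (ACExt Ac R) a d ∧ simAC Ac d c := by
  obtain ⟨l, r, σ, w, hm, h1, hs, h2⟩ := h
  rw [subtermAt_nil, Option.some_inj] at h1
  rw [replaceAt_nil, Option.some_inj] at h2
  subst h1 h2
  exact ⟨subst σ r, ⟨[], l, r, σ, a, hm, subtermAt_nil a,
    simAC_trans hab hs, replaceAt_nil ..⟩, simAC_refl _⟩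

lemma LC_comm (hTRS : IsTRS R) {f : F} (hf : f ∈ Ac) {X Y c : Tm F}
    (hPS : RewPS Ac (ACExt Ac R) (.fn f [X, Y]) c) :
    ∃ d, RewPS Ac (ACExt Ac R) (.fn f [Y, X]) d ∧ simAC Ac d c := by
  obtain ⟨p, l, r, σ, w, hm, h1, hs, h2⟩ := hPS
  have hab : simAC Ac (Tm.fn f [Y, X]) (Tm.fn f [X, Y]) := simAC_of_rew (comm_step hf Y X)
  match p with
  | [] => exact LC_root_redex hab ⟨l, r, σ, w, hm, h1, hs, h2⟩
  | 0 :: p' =>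
    rw [subtermAt_fn2_0] at h1
    rw [replaceAt_fn2_0] at h2
    cases hci : replaceAt X p' (subst σ r) with
    | none => rw [hci] at h2; cases h2
    | some X' =>
      rw [hci, Option.map_some, Option.some_inj] at h2
      subst h2
      refine ⟨.fn f [Y, X'], ⟨1 :: p', l, r, σ, w, hm, ?_, hs, ?_⟩, ?_⟩
      · rw [subtermAt_fn2_1]; exact h1
      · rw [replaceAt_fn2_1, hci, Option.map_some]
      · exact simAC_of_rew (comm_step hf Y X')
  | 1 :: p' =>
    rw [subtermAt_fn2_1] at h1
    rw [replaceAt_fn2_1] at h2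
    cases hci : replaceAt Y p' (subst σ r) with
    | none => rw [hci] at h2; cases h2
    | some Y' =>
      rw [hci, Option.map_some, Option.some_inj] at h2
      subst h2
      refine ⟨.fn f [Y', X], ⟨0 :: p', l, r, σ, w, hm, ?_, hs, ?_⟩, ?_⟩
      · rw [subtermAt_fn2_0]; exact h1
      · rw [replaceAt_fn2_0, hci, Option.map_some]
      · exact simAC_of_rew (comm_step hf Y' X)
  | (i + 2) :: p' => rw [subtermAt_fn2_ge] at h1; cases h1

lemma LC_assoc1 (hTRS : IsTRS R) {f : F} (hf : f ∈ Ac) {X Y Z c : Tm F}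
    (hPS : RewPS Ac (ACExt Ac R) (.fn f [.fn f [X, Y], Z]) c) :
    ∃ d, RewPS Ac (ACExt Ac R) (.fn f [X, .fn f [Y, Z]]) d ∧ simAC Ac d c := by
  obtain ⟨p, l, r, σ, w, hm, h1, hs, h2⟩ := hPS
  have hab : simAC Ac (Tm.fn f [X, .fn f [Y, Z]]) (Tm.fn f [.fn f [X, Y], Z]) :=
    simAC_symm (simAC_of_rew (assoc_step hf X Y Z))
  match p with
  | [] => exact LC_root_redex hab ⟨l, r, σ, w, hm, h1, hs, h2⟩
  | 0 :: [] =>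
    -- the hard case: the redex is `f (f X Y)` overlapping the AC-step
    rw [subtermAt_fn2_0, subtermAt_nil, Option.some_inj] at h1
    subst h1
    rw [replaceAt_fn2_0, replaceAt_nil, Option.map_some, Option.some_inj] at h2
    subst h2
    obtain ⟨u, v, rfl⟩ := rule_lhs_fn2 hTRS hm hs
    obtain ⟨l', r', σ', hm', hsl, hsr⟩ := ext_absorb hf hm rfl σ Z
    refine ⟨subst σ' r', ⟨[], l', r', σ', _, hm', subtermAt_nil _, ?_, replaceAt_nil ..⟩, hsr⟩
    exact simAC_trans hab (simAC_trans (simAC_congr2l hs f Z) hsl)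
  | 0 :: 0 :: p' =>
    rw [subtermAt_fn2_0, subtermAt_fn2_0] at h1
    rw [replaceAt_fn2_0] at h2
    cases hci : replaceAt X p' (subst σ r) with
    | none => rw [replaceAt_fn2_0, hci] at h2; cases h2
    | some X' =>
      rw [replaceAt_fn2_0, hci, Option.map_some, Option.map_some, Option.some_inj] at h2
      subst h2
      refine ⟨.fn f [X', .fn f [Y, Z]], ⟨0 :: p', l, r, σ, w, hm, ?_, hs, ?_⟩, ?_⟩
      · rw [subtermAt_fn2_0]; exact h1
      · rw [replaceAt_fn2_0, hci, Option.map_some]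
      · exact simAC_symm (simAC_of_rew (assoc_step hf X' Y Z))
  | 0 :: 1 :: p' =>
    rw [subtermAt_fn2_0, subtermAt_fn2_1] at h1
    rw [replaceAt_fn2_0] at h2
    cases hci : replaceAt Y p' (subst σ r) with
    | none => rw [replaceAt_fn2_1, hci] at h2; cases h2
    | some Y' =>
      rw [replaceAt_fn2_1, hci, Option.map_some, Option.map_some, Option.some_inj] at h2
      subst h2
      refine ⟨.fn f [X, .fn f [Y', Z]], ⟨1 :: 0 :: p', l, r, σ, w, hm, ?_, hs, ?_⟩, ?_⟩
      · rw [subtermAt_fn2_1, subtermAt_fn2_0]; exact h1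
      · rw [replaceAt_fn2_1, replaceAt_fn2_0, hci, Option.map_some, Option.map_some]
      · exact simAC_symm (simAC_of_rew (assoc_step hf X Y' Z))
  | 0 :: (i + 2) :: p' =>
    rw [subtermAt_fn2_0, subtermAt_fn2_ge] at h1; cases h1
  | 1 :: p' =>
    rw [subtermAt_fn2_1] at h1
    rw [replaceAt_fn2_1] at h2
    cases hci : replaceAt Z p' (subst σ r) with
    | none => rw [hci] at h2; cases h2
    | some Z' =>
      rw [hci, Option.map_some, Option.some_inj] at h2
      subst h2
      refine ⟨.fn f [X, .fn f [Y, Z']], ⟨1 :: 1 :: p', l, r, σ, w, hm, ?_, hs, ?_⟩, ?_⟩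
      · rw [subtermAt_fn2_1, subtermAt_fn2_1]; exact h1
      · rw [replaceAt_fn2_1, replaceAt_fn2_1, hci, Option.map_some, Option.map_some]
      · exact simAC_symm (simAC_of_rew (assoc_step hf X Y Z'))
  | (i + 2) :: p' => rw [subtermAt_fn2_ge] at h1; cases h1

lemma LC_assoc2 (hTRS : IsTRS R) {f : F} (hf : f ∈ Ac) {X Y Z c : Tm F}
    (hPS : RewPS Ac (ACExt Ac R) (.fn f [X, .fn f [Y, Z]]) c) :
    ∃ d, RewPS Ac (ACExt Ac R) (.fn f [.fn f [X, Y], Z]) d ∧ simAC Ac d c := by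
  obtain ⟨p, l, r, σ, w, hm, h1, hs, h2⟩ := hPS
  have hab : simAC Ac (Tm.fn f [.fn f [X, Y], Z]) (Tm.fn f [X, .fn f [Y, Z]]) :=
    simAC_of_rew (assoc_step hf X Y Z)
  match p with
  | [] => exact LC_root_redex hab ⟨l, r, σ, w, hm, h1, hs, h2⟩
  | 1 :: [] =>
    -- the hard case: the redex is `f Y Z` overlapping the AC-step
    rw [subtermAt_fn2_1, subtermAt_nil, Option.some_inj] at h1
    subst h1
    rw [replaceAt_fn2_1, replaceAt_nil, Option.map_some, Option.some_inj] at h2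
    subst h2
    obtain ⟨u, v, rfl⟩ := rule_lhs_fn2 hTRS hm hs
    obtain ⟨l', r', σ', hm', hsl, hsr⟩ := ext_absorb hf hm rfl σ X
    refine ⟨subst σ' r', ⟨[], l', r', σ', _, hm', subtermAt_nil _, ?_, replaceAt_nil ..⟩, ?_⟩
    · exact simAC_trans hab (simAC_trans (simAC_of_rew (comm_step hf X (Tm.fn f [Y, Z])))
        (simAC_trans (simAC_congr2l hs f X) hsl))
    · exact simAC_trans hsr (simAC_of_rew (comm_step hf (subst σ r) X))
  | 0 :: p' =>
    rw [subtermAt_fn2_0] at h1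
    rw [replaceAt_fn2_0] at h2
    cases hci : replaceAt X p' (subst σ r) with
    | none => rw [hci] at h2; cases h2
    | some X' =>
      rw [hci, Option.map_some, Option.some_inj] at h2
      subst h2
      refine ⟨.fn f [.fn f [X', Y], Z], ⟨0 :: 0 :: p', l, r, σ, w, hm, ?_, hs, ?_⟩, ?_⟩
      · rw [subtermAt_fn2_0, subtermAt_fn2_0]; exact h1
      · rw [replaceAt_fn2_0, replaceAt_fn2_0, hci, Option.map_some, Option.map_some]
      · exact simAC_of_rew (assoc_step hf X' Y Z)
  | 1 :: 0 :: p' =>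
    rw [subtermAt_fn2_1, subtermAt_fn2_0] at h1
    rw [replaceAt_fn2_1] at h2
    cases hci : replaceAt Y p' (subst σ r) with
    | none => rw [replaceAt_fn2_0, hci] at h2; cases h2
    | some Y' =>
      rw [replaceAt_fn2_0, hci, Option.map_some, Option.map_some, Option.some_inj] at h2
      subst h2
      refine ⟨.fn f [.fn f [X, Y'], Z], ⟨0 :: 1 :: p', l, r, σ, w, hm, ?_, hs, ?_⟩, ?_⟩
      · rw [subtermAt_fn2_0, subtermAt_fn2_1]; exact h1
      · rw [replaceAt_fn2_0, replaceAt_fn2_1, hci, Option.map_some, Option.map_some]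
      · exact simAC_of_rew (assoc_step hf X Y' Z)
  | 1 :: 1 :: p' =>
    rw [subtermAt_fn2_1, subtermAt_fn2_1] at h1
    rw [replaceAt_fn2_1] at h2
    cases hci : replaceAt Z p' (subst σ r) with
    | none => rw [replaceAt_fn2_1, hci] at h2; cases h2
    | some Z' =>
      rw [replaceAt_fn2_1, hci, Option.map_some, Option.map_some, Option.some_inj] at h2
      subst h2
      refine ⟨.fn f [.fn f [X, Y], Z'], ⟨1 :: p', l, r, σ, w, hm, ?_, hs, ?_⟩, ?_⟩
      · rw [subtermAt_fn2_1]; exact h1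
      · rw [replaceAt_fn2_1, hci, Option.map_some]
      · exact simAC_of_rew (assoc_step hf X Y Z')
  | 1 :: (i + 2) :: p' =>
    rw [subtermAt_fn2_1, subtermAt_fn2_ge] at h1; cases h1
  | (i + 2) :: p' => rw [subtermAt_fn2_ge] at h1; cases h1

end LCRoot


lemma LC_main {Ac : Set F} {R : TRS F} (hTRS : IsTRS R) :
    ∀ (b a c : Tm F), ACstep1 Ac b a → RewPS Ac (ACExt Ac R) b c →
      ∃ d, RewPS Ac (ACExt Ac R) a d ∧ simAC Ac d c := by
  suffices h : ∀ (N : Nat) (b : Tm F), sizeOf b < N → ∀ a c, ACstep1 Ac b a →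
      RewPS Ac (ACExt Ac R) b c → ∃ d, RewPS Ac (ACExt Ac R) a d ∧ simAC Ac d c by
    exact fun b a c => h (sizeOf b + 1) b (by omega) a c
  intro N
  induction N with
  | zero => intro b hb; omega
  | succ N ihN =>
    intro b hb a c hAC hPS
    obtain ⟨q, lhs, rhs, σ₀, hax, h1, h2⟩ := hAC
    obtain ⟨p, l, r, σ, w, hm, hw, hwl, hc⟩ := hPS
    match q with
    | [] =>
      rw [subtermAt_nil, Option.some_inj] at h1
      rw [replaceAt_nil, Option.some_inj] at h2
      subst h1
      subst h2
      rcases hax with hax | hax <;> obtain ⟨f, hf, ⟨hl, hr⟩ | ⟨hl, hr⟩⟩ := mem_ACax hax <;>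
        subst hl hr
      · -- assoc, forward direction: b = f(f(X,Y),Z), a = f(X,f(Y,Z))
        have eb : subst σ₀ (Tm.fn f [Tm.fn f [Tm.var 0, Tm.var 1], Tm.var 2]) =
            Tm.fn f [Tm.fn f [σ₀ 0, σ₀ 1], σ₀ 2] := by
          rw [subst_fn2, subst_fn2, subst_var, subst_var, subst_var]
        have ea : subst σ₀ (Tm.fn f [Tm.var 0, Tm.fn f [Tm.var 1, Tm.var 2]]) =
            Tm.fn f [σ₀ 0, Tm.fn f [σ₀ 1, σ₀ 2]] := by
          rw [subst_fn2, subst_fn2, subst_var, subst_var, subst_var]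
        rw [eb] at hw hc
        rw [ea]
        exact LC_assoc1 hTRS hf ⟨p, l, r, σ, w, hm, hw, hwl, hc⟩
      · -- comm, forward direction
        have eb : subst σ₀ (Tm.fn f [Tm.var 0, Tm.var 1]) = Tm.fn f [σ₀ 0, σ₀ 1] := by
          rw [subst_fn2, subst_var, subst_var]
        have ea : subst σ₀ (Tm.fn f [Tm.var 1, Tm.var 0]) = Tm.fn f [σ₀ 1, σ₀ 0] := by
          rw [subst_fn2, subst_var, subst_var]
        rw [eb] at hw hc
        rw [ea]
        exact LC_comm hTRS hf ⟨p, l, r, σ, w, hm, hw, hwl, hc⟩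
      · -- assoc, backward direction: b = f(X,f(Y,Z)), a = f(f(X,Y),Z)
        have eb : subst σ₀ (Tm.fn f [Tm.var 0, Tm.fn f [Tm.var 1, Tm.var 2]]) =
            Tm.fn f [σ₀ 0, Tm.fn f [σ₀ 1, σ₀ 2]] := by
          rw [subst_fn2, subst_fn2, subst_var, subst_var, subst_var]
        have ea : subst σ₀ (Tm.fn f [Tm.fn f [Tm.var 0, Tm.var 1], Tm.var 2]) =
            Tm.fn f [Tm.fn f [σ₀ 0, σ₀ 1], σ₀ 2] := by
          rw [subst_fn2, subst_fn2, subst_var, subst_var, subst_var]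
        rw [eb] at hw hc
        rw [ea]
        exact LC_assoc2 hTRS hf ⟨p, l, r, σ, w, hm, hw, hwl, hc⟩
      · -- comm, backward direction
        have eb : subst σ₀ (Tm.fn f [Tm.var 1, Tm.var 0]) = Tm.fn f [σ₀ 1, σ₀ 0] := by
          rw [subst_fn2, subst_var, subst_var]
        have ea : subst σ₀ (Tm.fn f [Tm.var 0, Tm.var 1]) = Tm.fn f [σ₀ 0, σ₀ 1] := by
          rw [subst_fn2, subst_var, subst_var]
        rw [eb] at hw hc
        rw [ea]
        exact LC_comm hTRS hf ⟨p, l, r, σ, w, hm, hw, hwl, hc⟩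
    | j :: q' =>
      cases b with
      | var n => rw [subtermAt] at h1; cases h1
      | fn f ts =>
        cases hj : ts[j]? with
        | none => rw [subtermAt_fn_none hj] at h1; cases h1
        | some tj =>
          rw [subtermAt_fn_some hj] at h1
          rw [replaceAt_fn_some hj] at h2
          cases haj : replaceAt tj q' (subst σ₀ rhs) with
          | none => rw [haj] at h2; cases h2
          | some tj' =>
            rw [haj, Option.map_some, Option.some_inj] at h2
            subst h2
            have hACj : ACstep1 Ac tj tj' := ⟨q', lhs, rhs, σ₀, hax, h1, haj⟩
            have hACb : ACstep1 Ac (Tm.fn f ts) (Tm.fn f (ts.set j tj')) :=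
              ⟨j :: q', lhs, rhs, σ₀, hax, by rw [subtermAt_fn_some hj]; exact h1,
                by rw [replaceAt_fn_some hj, haj, Option.map_some]⟩
            match p with
            | [] =>
              exact LC_root_redex (simAC_symm (simAC_of_ACstep1 hACb))
                ⟨l, r, σ, w, hm, hw, hwl, hc⟩
            | i :: p' =>
              cases hi : ts[i]? with
              | none => rw [subtermAt_fn_none hi] at hw; cases hw
              | some ti =>
                rw [subtermAt_fn_some hi] at hw
                rw [replaceAt_fn_some hi] at hc
                cases hci : replaceAt ti p' (subst σ r) with
                | none => rw [hci] at hc; cases hc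
                | some ci =>
                  rw [hci, Option.map_some, Option.some_inj] at hc
                  subst hc
                  have hlt_j : j < ts.length := (List.getElem?_eq_some_iff.mp hj).1
                  have hlt_i : i < ts.length := (List.getElem?_eq_some_iff.mp hi).1
                  by_cases hij : i = j
                  · subst hij
                    have hti : ti = tj := by rw [hi] at hj; exact Option.some_inj.mp hj
                    subst hti
                    have hPSj : RewPS Ac (ACExt Ac R) ti ci :=
                      ⟨p', l, r, σ, w, hm, hw, hwl, hci⟩
                    have hszts : sizeOf ti < sizeOf ts :=
                      List.sizeOf_lt_of_mem (List.mem_of_getElem? hi)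
                    have hszb : sizeOf ti < N := by
                      have : sizeOf (Tm.fn f ts) = 1 + sizeOf f + sizeOf ts := by
                        simp [Tm.fn.sizeOf_spec]
                      omega
                    obtain ⟨d₀, hd₀, hsim₀⟩ := ihN ti hszb tj' ci hACj hPSj
                    refine ⟨.fn f ((ts.set i tj').set i d₀),
                      rewPS_congr (List.getElem?_set_self hlt_i) hd₀, ?_⟩
                    rw [List.set_set]
                    have h3 := simAC_congr hsim₀ f (ts.set i d₀) i
                      (List.getElem?_set_self hlt_i)
                    rw [List.set_set] at h3
                    exact h3
                  · have hi' : (ts.set j tj')[i]? = some ti := by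
                      rw [List.getElem?_set_ne (Ne.symm hij)]; exact hi
                    refine ⟨.fn f ((ts.set j tj').set i ci),
                      ⟨i :: p', l, r, σ, w, hm, ?_, hwl, ?_⟩, ?_⟩
                    · rw [subtermAt_fn_some hi']; exact hw
                    · rw [replaceAt_fn_some hi', hci, Option.map_some]
                    · have hsimj : simAC Ac tj tj' := simAC_of_ACstep1 hACj
                      have hj' : (ts.set i ci)[j]? = some tj := by
                        rw [List.getElem?_set_ne hij]; exact hj
                      have h3 := simAC_congr hsimj f (ts.set i ci) j hj'
                      have e : (ts.set j tj').set i ci = (ts.set i ci).set j tj' :=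
                        List.set_comm _ _ (Ne.symm hij)
                      rw [e]
                      exact simAC_symm h3

end Aux

/-- Strict coherence: `∼AC · →R^e,AC ⊆ →R^e,AC · ∼AC`. -/
theorem stmt15 {F : Type} (Ac : Set F) (R : TRS F) (hTRS : IsTRS R) :
    ∀ a b c, simAC Ac a b → RewPS Ac (ACExt Ac R) b c →
      ∃ d, RewPS Ac (ACExt Ac R) a d ∧ simAC Ac d c := by
  suffices h : ∀ a b, simAC Ac a b →
      (∀ c, RewPS Ac (ACExt Ac R) b c → ∃ d, RewPS Ac (ACExt Ac R) a d ∧ simAC Ac d c) ∧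
      (∀ c, RewPS Ac (ACExt Ac R) a c → ∃ d, RewPS Ac (ACExt Ac R) b d ∧ simAC Ac d c) by
    exact fun a b c hab hbc => (h a b hab).1 c hbc
  intro a b hab
  induction hab with
  | rel x y h =>
    exact ⟨fun c hc => LC_main hTRS y x c (ACstep1_symm (ACstep1_of_rew h)) hc,
      fun c hc => LC_main hTRS x y c (ACstep1_of_rew h) hc⟩
  | refl x => exact ⟨fun c hc => ⟨c, hc, simAC_refl c⟩, fun c hc => ⟨c, hc, simAC_refl c⟩⟩
  | symm x y _ ih => exact ⟨ih.2, ih.1⟩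
  | trans x y z _ _ ih1 ih2 =>
    constructor
    · intro c hc
      obtain ⟨d1, hd1, hs1⟩ := ih2.1 c hc
      obtain ⟨d, hd, hs⟩ := ih1.1 d1 hd1
      exact ⟨d, hd, simAC_trans hs hs1⟩
    · intro c hc
      obtain ⟨d1, hd1, hs1⟩ := ih1.2 c hc
      obtain ⟨d, hd, hs⟩ := ih2.2 d1 hd1
      exact ⟨d, hd, simAC_trans hs hs1⟩
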